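/- In a high-risk weakest-link game (1 < λ < H/(H−1)), the best-reply reaction BR_i(a_{-i}) = min_{j≠i} a_j is weakly dominant against monotone play: for every reaction function R'_i and every profile R_{-i} of monotone reaction functions of the other players, U_i(BR_i, R_{-i}) ≥ U_i(R'_i, R_{-i}). -/

import Mathlib

/-- A reaction function for player `i` must not depend on `i`'s own coordinate:
it is a function of the actions `a_{-i}` of the other players. -/
def IndepOf {ι : Type*} {A : ι → Type*} (i : ι) (f : (∀ j, A j) → A i) : Prop :=
  ∀ a b : ∀ j, A j, (∀ j, j ≠ i → a j = b j) → f a = f b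

/-- The set of fixed points (executable outcomes) of a profile of reaction functions. -/
def FixedPts {ι : Type*} {A : ι → Type*} (R : ∀ i, (∀ j, A j) → A i) : Set (∀ j, A j) :=
  {a | ∀ i, R i a = a i}

/-- Extended payoff of a reaction-function profile: the supremum (= maximum, in a
finite game) of `u i` over the fixed points, and `⊥ = -∞` when there is none. -/
noncomputable def Upay {ι : Type*} {A : ι → Type*}
    (u : ∀ i : ι, (∀ j, A j) → ℝ) (R : ∀ i, (∀ j, A j) → A i) (i : ι) : EReal :=
  sSup ((fun a => ((u i a : ℝ) : EReal)) '' FixedPts R)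

/-- A profile is unambiguous if some fixed point weakly Pareto-dominates all fixed points. -/
def Unambiguous {ι : Type*} {A : ι → Type*}
    (u : ∀ i : ι, (∀ j, A j) → ℝ) (R : ∀ i, (∀ j, A j) → A i) : Prop :=
  ∃ a ∈ FixedPts R, ∀ a' ∈ FixedPts R, ∀ i, u i a' ≤ u i a

/-- Reaction-function equilibrium: an unambiguous profile with no profitable
unilateral deviation through any reaction function. -/
def IsRFE {ι : Type*} [DecidableEq ι] {A : ι → Type*}
    (u : ∀ i : ι, (∀ j, A j) → ℝ) (R : ∀ i, (∀ j, A j) → A i) : Prop :=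
  Unambiguous u R ∧
    ∀ (i : ι) (R' : (∀ j, A j) → A i), IndepOf i R' →
      Upay u (Function.update R i R') i ≤ Upay u R i

/-- Outcome `a` is supported in reaction-function equilibrium. -/
def SupportedOutcome {ι : Type*} [DecidableEq ι] {A : ι → Type*}
    (u : ∀ i : ι, (∀ j, A j) → ℝ) (a : ∀ j, A j) : Prop :=
  ∃ R : ∀ i, (∀ j, A j) → A i, (∀ i, IndepOf i (R i)) ∧ IsRFE u R ∧
    a ∈ FixedPts R ∧ ∀ a' ∈ FixedPts R, ∀ i, u i a' ≤ u i a

/-- Player `i`'s maxmin payoff. -/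
noncomputable def maxmin {ι : Type*} [DecidableEq ι] {A : ι → Type*}
    [∀ j, Fintype (A j)] [∀ j, Nonempty (A j)]
    (u : ∀ i : ι, (∀ j, A j) → ℝ) (i : ι) : ℝ :=
  ⨆ x : A i, ⨅ a : ∀ j, A j, u i (Function.update a i x)

/-- A reaction function is safe if it guarantees at least the maxmin payoff. -/
def SafeRF {ι : Type*} [DecidableEq ι] {A : ι → Type*}
    [∀ j, Fintype (A j)] [∀ j, Nonempty (A j)]
    (u : ∀ i : ι, (∀ j, A j) → ℝ) (i : ι) (r : (∀ j, A j) → A i) : Prop :=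
  ∀ a : ∀ j, A j, maxmin u i ≤ u i (Function.update a i (r a))

/-- Conditional collaboration: coordinate if the others coordinate (at a positive
level), and otherwise react at least at the others' minimum but strictly below
their maximum investment. -/
def CondCollab {ι : Type*} {H : ℕ} (i : ι) (r : (ι → Fin (H + 1)) → Fin (H + 1)) : Prop :=
  (∀ α : Fin (H + 1), α ≠ 0 → ∀ a : ι → Fin (H + 1), (∀ j, j ≠ i → a j = α) → r a = α) ∧
  (∀ a : ι → Fin (H + 1), (∃ j k, j ≠ i ∧ k ≠ i ∧ a j ≠ a k) →
    (∃ j, j ≠ i ∧ a j ≤ r a) ∧ (∃ j, j ≠ i ∧ r a < a j))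

/-- Payoff consistency: the reaction is the same across payoff-equivalent
action profiles of the others. -/
def PayoffConsistent {ι : Type*} [DecidableEq ι] {H : ℕ}
    (u : ι → (ι → Fin (H + 1)) → ℝ) (i : ι) (r : (ι → Fin (H + 1)) → Fin (H + 1)) : Prop :=
  ∀ a a' : ι → Fin (H + 1),
    (∀ x : Fin (H + 1), u i (Function.update a i x) = u i (Function.update a' i x)) →
    r a = r a'

/-- A symmetric reaction function: invariant under permutations of the other players. -/
def SymmRF {ι : Type*} {H : ℕ} (i : ι) (r : (ι → Fin (H + 1)) → Fin (H + 1)) : Prop :=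
  ∀ σ : Equiv.Perm ι, σ i = i → ∀ a : ι → Fin (H + 1), r (fun k => a (σ k)) = r a

/-- A norm: a profile in which all players play the same symmetric, monotone
reaction function. -/
def IsNorm {ι : Type*} [DecidableEq ι] {H : ℕ} (R : ∀ _ : ι, (ι → Fin (H + 1)) → Fin (H + 1)) : Prop :=
  (∀ i, IndepOf i (R i)) ∧ (∀ i, Monotone (R i)) ∧ (∀ i, SymmRF i (R i)) ∧
  (∀ (i j : ι) (a : ι → Fin (H + 1)), R j (fun k => a (Equiv.swap i j k)) = R i a)

/-- Norm-proofness: playing `r` against any norm yields at least the payoff of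
conforming to the norm. -/
noncomputable def NormProof {ι : Type*} [DecidableEq ι] {H : ℕ}
    (u : ι → (ι → Fin (H + 1)) → ℝ) (i : ι) (r : (ι → Fin (H + 1)) → Fin (H + 1)) : Prop :=
  ∀ R : ∀ _ : ι, (ι → Fin (H + 1)) → Fin (H + 1), IsNorm R →
    Upay u R i ≤ Upay u (Function.update R i r) i


/-!
Against monotone reactions of the others, the profile in which `i` matches the minimum of the
others is monotone, so by Knaster–Tarski it has a greatest fixed point `b`; at every fixed point
`i` is a weakest link, so `i` earns `(λ - 1) b_i ≥ 0` there. Now let `a` be an outcome reachable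
with any other reaction of `i`. If `i` is a weakest link at `a`, then `a` lies below its image
under the min-matching profile, hence `a ≤ b` and `i` earns `(λ - 1) a_i ≤ (λ - 1) b_i`. Otherwise
`i` over-invests by at least one unit, and the high-risk bound `λ (H - 1) < H` makes the payoff
negative.
-/

section FixedPoints

variable {ι : Type*} {A : ι → Type*}

theorem coe_le_upay (u : ι → (∀ j, A j) → ℝ) {R : ∀ i, (∀ j, A j) → A i} {a : ∀ j, A j}
    (ha : a ∈ FixedPts R) (i : ι) : (u i a : EReal) ≤ Upay u R i :=
  le_sSup ⟨a, ha, rfl⟩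

theorem exists_mem_fixedPts_forall_le_of_le_reaction [∀ j, CompleteLattice (A j)]
    (R : ∀ i, (∀ j, A j) → A i) (hR : ∀ j, Monotone (R j)) :
    ∃ b ∈ FixedPts R, ∀ a : ∀ j, A j, (∀ j, a j ≤ R j a) → a ≤ b := by
  let F : (∀ j, A j) →o (∀ j, A j) := ⟨fun x j => R j x, fun _ _ hxy j => hR j hxy⟩
  exact ⟨F.gfp, fun j => congrFun F.map_gfp j, fun a ha => F.le_gfp ha⟩

end FixedPoints

def IsMinReply {ι α : Type*} [Preorder α] (i : ι) (br : (ι → α) → α) : Prop :=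
  ∀ a : ι → α, (∀ j, j ≠ i → br a ≤ a j) ∧ (∃ j, j ≠ i ∧ br a = a j)

namespace IsMinReply

variable {ι α : Type*} [Preorder α] {i : ι} {br : (ι → α) → α}

theorem le_apply (hbr : IsMinReply i br) {a : ι → α} {x : α} (hx : ∀ j, j ≠ i → x ≤ a j) :
    x ≤ br a := by
  obtain ⟨j, hj, hbrj⟩ := (hbr a).2
  exact hbrj ▸ hx j hj

theorem monotone (hbr : IsMinReply i br) : Monotone br := fun _ _ hab =>
  hbr.le_apply fun j hj => ((hbr _).1 j hj).trans (hab j)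

theorem le_of_mem_fixedPts_update [DecidableEq ι] (hbr : IsMinReply i br)
    {R : ∀ _ : ι, (ι → α) → α} {b : ι → α} (hb : b ∈ FixedPts (Function.update R i br))
    (j : ι) : b i ≤ b j := by
  have hbi : br b = b i := by simpa using hb i
  by_cases hj : j = i
  · rw [hj]
  · exact hbi ▸ (hbr b).1 j hj

end IsMinReply

section WeakestLink

variable {ι : Type*} [Fintype ι] [Nonempty ι] {H : ℕ}

def minInvestment (a : ι → Fin (H + 1)) : ℝ :=
  Finset.univ.inf' Finset.univ_nonempty fun j => ((a j : ℕ) : ℝ)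

theorem minInvestment_le (a : ι → Fin (H + 1)) (k : ι) : minInvestment a ≤ (a k : ℕ) :=
  Finset.inf'_le _ (Finset.mem_univ k)

theorem minInvestment_eq_of_forall_le {a : ι → Fin (H + 1)} {i : ι} (h : ∀ j, a i ≤ a j) :
    minInvestment a = (a i : ℕ) :=
  le_antisymm (minInvestment_le a i)
    (Finset.le_inf' _ _ fun j _ => by exact_mod_cast h j)

theorem weakestLink_payoff_eq_of_forall_le (l : ℝ) {a : ι → Fin (H + 1)} {i : ι}
    (h : ∀ j, a i ≤ a j) : l * minInvestment a - (a i : ℕ) = (l - 1) * (a i : ℕ) := by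
  rw [minInvestment_eq_of_forall_le h]
  ring

theorem weakestLink_payoff_neg_of_lt {l : ℝ} (hl1 : 1 < l) (hl2 : l * ((H : ℝ) - 1) < H)
    {a : ι → Fin (H + 1)} {i k : ι} (hk : a k < a i) : l * minInvestment a - (a i : ℕ) < 0 := by
  have hki : ((a k : ℕ) : ℝ) + 1 ≤ (a i : ℕ) := by exact_mod_cast Nat.succ_le_of_lt hk
  have hiH : ((a i : ℕ) : ℝ) ≤ H := by exact_mod_cast (a i).is_le
  calc l * minInvestment a - (a i : ℕ)
      ≤ l * (a k : ℕ) - (a i : ℕ) := by gcongr; exact minInvestment_le a k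
    _ ≤ (l - 1) * ((H : ℝ) - 1) - 1 := by nlinarith
    _ < 0 := by linarith

end WeakestLink

theorem stmt15_general {ι : Type*} [Fintype ι] [DecidableEq ι] [Nonempty ι] {H : ℕ}
    (l : ℝ) (hl1 : 1 < l) (hl2 : l * ((H : ℝ) - 1) < (H : ℝ))
    (u : ι → (ι → Fin (H + 1)) → ℝ)
    (hu : ∀ i a, u i a =
      l * (Finset.univ.inf' Finset.univ_nonempty fun j => ((a j : ℕ) : ℝ)) - ((a i : ℕ) : ℝ))
    (i : ι) (br : (ι → Fin (H + 1)) → Fin (H + 1))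
    (hbr : ∀ a : ι → Fin (H + 1), (∀ j, j ≠ i → br a ≤ a j) ∧ (∃ j, j ≠ i ∧ br a = a j))
    (R : ∀ _ : ι, (ι → Fin (H + 1)) → Fin (H + 1))
    (hR : ∀ j, j ≠ i → IndepOf j (R j) ∧ Monotone (R j))
    (r' : (ι → Fin (H + 1)) → Fin (H + 1)) :
    Upay u (Function.update R i r') i ≤ Upay u (Function.update R i br) i := by
  have hbr : IsMinReply i br := hbr
  have hmono : ∀ j, Monotone (Function.update R i br j) := by
    intro j
    by_cases hj : j = i
    · subst hj; simpa using hbr.monotone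
    · simpa [hj] using (hR j hj).2
  obtain ⟨b, hb, hb_ge⟩ := exists_mem_fixedPts_forall_le_of_le_reaction _ hmono
  have hub : u i b = (l - 1) * (b i : ℕ) :=
    (hu i b).trans (weakestLink_payoff_eq_of_forall_le l (hbr.le_of_mem_fixedPts_update hb))
  refine sSup_le ?_
  rintro _ ⟨a, ha, rfl⟩
  refine le_trans (EReal.coe_le_coe_iff.mpr ?_) (coe_le_upay u hb i)
  by_cases hmin : ∀ j, a i ≤ a j
  · have hab : a ≤ b := hb_ge a fun j => by
      by_cases hj : j = i
      · subst hj; simpa using hbr.le_apply fun k _ => hmin k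
      · simpa [hj] using (ha j).ge
    rw [(hu i a).trans (weakestLink_payoff_eq_of_forall_le l hmin), hub]
    exact mul_le_mul_of_nonneg_left (by exact_mod_cast hab i) (by linarith)
  · push_neg at hmin
    obtain ⟨k, hk⟩ := hmin
    rw [hu, hub]
    exact (weakestLink_payoff_neg_of_lt hl1 hl2 hk).le.trans
      (mul_nonneg (by linarith) (Nat.cast_nonneg _))

/-- in a high-risk weakest-link game (`1 < λ < H/(H−1)`), the
best-reply reaction (match the minimum investment of the others) is weakly
dominant against monotone play. -/
theorem stmt15 {ι : Type*} [Fintype ι] [DecidableEq ι] [Nonempty ι] {H : ℕ}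
    (hι : 2 ≤ Fintype.card ι) (hH : 0 < H)
    (l : ℝ) (hl1 : 1 < l) (hl2 : l * ((H : ℝ) - 1) < (H : ℝ))
    (u : ι → (ι → Fin (H + 1)) → ℝ)
    (hu : ∀ i a, u i a =
      l * (Finset.univ.inf' Finset.univ_nonempty fun j => ((a j : ℕ) : ℝ)) - ((a i : ℕ) : ℝ))
    (i : ι) (br : (ι → Fin (H + 1)) → Fin (H + 1))
    (hbr : ∀ a : ι → Fin (H + 1), (∀ j, j ≠ i → br a ≤ a j) ∧ (∃ j, j ≠ i ∧ br a = a j))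
    (R : ∀ _ : ι, (ι → Fin (H + 1)) → Fin (H + 1))
    (hR : ∀ j, j ≠ i → IndepOf j (R j) ∧ Monotone (R j))
    (r' : (ι → Fin (H + 1)) → Fin (H + 1)) (hr' : IndepOf i r') :
    Upay u (Function.update R i r') i ≤ Upay u (Function.update R i br) i :=
  stmt15_general l hl1 hl2 u hu i br hbr R hR r'
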